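/- Let Q be a commutative IP loop. Then M0(Q) ∩ C0(Q) = Z(Q). -/
import Mathlib


universe u

namespace CRIFPaper

/-- A loop: a set with a binary operation and a neutral element `1` in which
all left and right translations are bijections (equivalently, the equations
`a * x = b` and `y * a = b` have unique solutions). -/
class Loop (Q : Type u) extends Mul Q, One Q where
  one_mul : ∀ x : Q, 1 * x = x
  mul_one : ∀ x : Q, x * 1 = x
  mulLeft_bijective : ∀ a : Q, Function.Bijective (fun x : Q => a * x)
  mulRight_bijective : ∀ a : Q, Function.Bijective (fun x : Q => x * a)

/-- An inverse property (IP) loop. -/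
class IPLoop (Q : Type u) extends Loop Q, Inv Q where
  lip : ∀ x y : Q, x⁻¹ * (x * y) = y
  rip : ∀ x y : Q, (y * x) * x⁻¹ = y

/-- Moufang elements of type `M0`. -/
def M0 (Q : Type u) [Mul Q] : Set Q :=
  {c : Q | ∀ x y : Q, (c * (x * y)) * c = (c * x) * (y * c)}

/-- Moufang elements of type `M1`. -/
def M1 (Q : Type u) [Mul Q] : Set Q :=
  {c : Q | ∀ x y : Q, x * (c * (x * y)) = ((x * c) * x) * y}

/-- Moufang elements of type `M2`. -/
def M2 (Q : Type u) [Mul Q] : Set Q :=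
  {c : Q | ∀ x y : Q, (x * c) * (y * x) = (x * (c * y)) * x}

/-- Moufang elements of type `M3`. -/
def M3 (Q : Type u) [Mul Q] : Set Q :=
  {c : Q | ∀ x y : Q, (x * y) * (c * x) = (x * (y * c)) * x}

/-- C elements. -/
def C0 (Q : Type u) [Mul Q] : Set Q :=
  {c : Q | ∀ x y : Q, x * (c * (c * y)) = ((x * c) * c) * y}

/-- The center of a loop: elements commuting and associating with everything. -/
def center (Q : Type u) [Mul Q] : Set Q :=
  {a : Q | ∀ x y : Q, a * x = x * a ∧ a * (x * y) = (a * x) * y ∧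
    x * (a * y) = (x * a) * y ∧ x * (y * a) = (x * y) * a}

section Aux

variable {Q : Type u} [IPLoop Q]

lemma ip_inv_inv (x : Q) : x⁻¹⁻¹ = x := by
  have h := IPLoop.rip (x⁻¹) x
  -- (x * x⁻¹) * x⁻¹⁻¹ = x
  have h2 : x * x⁻¹ = 1 := by
    have := IPLoop.rip x (1 : Q)
    rwa [Loop.one_mul] at this
  rw [h2, Loop.one_mul] at h
  exact h

lemma ip_minv (x y : Q) : x * (x⁻¹ * y) = y := by
  have h := IPLoop.lip (x⁻¹) y
  rwa [ip_inv_inv] at h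

lemma ip_antiauto (x y : Q) : (x * y)⁻¹ = y⁻¹ * x⁻¹ := by
  have h1 : (x * y)⁻¹ * x = y⁻¹ := by
    have h := IPLoop.rip y x   -- (x*y)*y⁻¹ = x
    calc (x * y)⁻¹ * x = (x * y)⁻¹ * ((x * y) * y⁻¹) := by rw [h]
      _ = y⁻¹ := IPLoop.lip _ _
  have h2 := IPLoop.rip x ((x * y)⁻¹)  -- ((x*y)⁻¹ * x) * x⁻¹ = (x*y)⁻¹
  rw [h1] at h2
  exact h2.symm

end Aux

/-- In a commutative IP loop, `M0 ∩ C0 = Z(Q)`. -/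
theorem statement14 (Q : Type u) [IPLoop Q]
    (hcomm : ∀ x y : Q, x * y = y * x) :
    M0 Q ∩ C0 Q = center Q := by
  ext a
  simp only [Set.mem_inter_iff, M0, C0, center, Set.mem_setOf_eq]
  constructor
  · rintro ⟨hM0, hC0⟩
    -- Key derived identities
    have M : ∀ x y : Q, a * (a * (x * y)) = (a * x) * (a * y) := by
      intro x y
      have h := hM0 x y
      rwa [hcomm (a * (x * y)) a, hcomm y a] at h
    have A : ∀ x y : Q, a⁻¹ * (a⁻¹ * (x * y)) = (a⁻¹ * x) * (a⁻¹ * y) := by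
      intro x y
      have h := M (a⁻¹ * x) (a⁻¹ * y)
      rw [ip_minv a x, ip_minv a y] at h
      calc a⁻¹ * (a⁻¹ * (x * y))
          = a⁻¹ * (a⁻¹ * (a * (a * ((a⁻¹ * x) * (a⁻¹ * y))))) := by rw [h]
        _ = a⁻¹ * (a * ((a⁻¹ * x) * (a⁻¹ * y))) := by rw [IPLoop.lip]
        _ = (a⁻¹ * x) * (a⁻¹ * y) := by rw [IPLoop.lip]
    have I' : ∀ u v : Q, (a * u)⁻¹ * (a * (a * v)) = a * (u⁻¹ * v) := by
      intro u v
      have h2 := M u (u⁻¹ * v)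
      rw [ip_minv u v] at h2
      -- h2 : a * (a * v) = (a * u) * (a * (u⁻¹ * v))
      rw [h2, IPLoop.lip]
    have I2 : ∀ x y : Q, a * (x * y) = (a⁻¹ * x) * (a * (a * y)) := by
      intro x y
      have h := I' x⁻¹ y
      rw [ip_inv_inv, ip_antiauto, ip_inv_inv, hcomm x a⁻¹] at h
      exact h.symm
    have T : ∀ x y : Q, a * (a * (a * (x * y))) = x * (a * (a * (a * y))) := by
      intro x y
      have h : a * (x * y) = a⁻¹ * (a⁻¹ * (x * (a * (a * (a * y))))) := by
        rw [I2 x y, A x (a * (a * (a * y))), IPLoop.lip]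
      rw [h, ip_minv, ip_minv]
    have S : ∀ x y : Q, x * (a * (a * y)) = (a * (a * x)) * y := by
      intro x y
      have h := hC0 x y
      rwa [hcomm (x * a) a, hcomm x a] at h
    have U : ∀ x y : Q, a * ((a * x) * (a * y)) = (a * (a * x)) * (a * y) := by
      intro x y
      rw [← M x y, T x y]
      exact S x (a * y)
    have assoc2 : ∀ u v : Q, a * (u * v) = (a * u) * v := by
      intro u v
      have h := U (a⁻¹ * u) (a⁻¹ * v)
      rwa [ip_minv a u, ip_minv a v] at h
    intro x y
    refine ⟨hcomm a x, assoc2 x y, ?_, ?_⟩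
    · calc x * (a * y) = (a * y) * x := hcomm _ _
        _ = a * (y * x) := (assoc2 y x).symm
        _ = a * (x * y) := by rw [hcomm y x]
        _ = (a * x) * y := assoc2 x y
        _ = (x * a) * y := by rw [hcomm a x]
    · calc x * (y * a) = x * (a * y) := by rw [hcomm y a]
        _ = (a * y) * x := hcomm _ _
        _ = a * (y * x) := (assoc2 y x).symm
        _ = a * (x * y) := by rw [hcomm y x]
        _ = (x * y) * a := hcomm _ _
  · intro h
    constructor
    · intro x y
      have h1 := (h x y).2.1            -- a*(x*y) = (a*x)*y
      have h2 := (h (a * x) y).2.2.2    -- (a*x)*(y*a) = ((a*x)*y)*a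
      rw [h1, ← h2]
    · intro x y
      have h1 := (h x (a * y)).2.2.1    -- x*(a*(a*y)) = (x*a)*(a*y)
      have h2 := (h (x * a) y).2.2.1    -- (x*a)*(a*y) = ((x*a)*a)*y
      rw [h1, h2]
end CRIFPaper
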